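/- Let ε > 0, n ≥ 2, k ≥ 1, r₀ ∈ (0,1/2), and let h ∈ C([0,1]) ∩ C^{2,1}((0,1]) be the unique solution of h''(r) + b(r) h'(r) − (k(k+n−3)/r²) h(r) = 0 on (0,1) with h(0) = 0, h(1) = 1, where b(r) = (n−2)/r + 2(r−r₀)₊/(ε + (r−r₀)₊²). Then |h'(r)| ≤ C for all 0 < r < 1, where C > 0 depends only on n, k, and r₀ (in particular C is independent of ε). -/

import Mathlib

/-!
The integrating factor `μ(r) = r^(n-2) (ε + (r-r₀)₊²)` satisfies `μ' = b μ`, so the equation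
reads `(μ h')' = c μ h / r²` with `c = k(k+n-3) ≥ 0`. When `c > 0` this flux form yields a
maximum principle: `0 ≤ h ≤ 1`, hence `μ h'` is nondecreasing, which forces `h' ≥ 0`. When
`c = 0` (`n = 2`, `k = 1`) the flux `μ h'` is constant instead.

On `(0, r₀)` the equation is the Euler equation `h'' + (n-2)/r h' = c h / r²`, and the maximum
principle gives `h(r) = h(r₀) (r/r₀)^k` there, so `h' ≤ k/r₀` on `(0, r₀]`. For `r > r₀`,
`(μ h')' ≤ c μ(r) / r₀²` on `[r₀, r]` and `μ(r₀) h'(r₀) ≤ μ(r) k/r₀`, so dividing by `μ(r)`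
gives `h'(r) ≤ k/r₀ + c/r₀²`, a bound independent of `ε`.
-/

open Set

/-- The coefficient `b(r) = (n−2)/r + 2(r−r₀)₊/(ε + (r−r₀)₊²)`. -/
noncomputable def bCoeff (n : ℕ) (r₀ ε r : ℝ) : ℝ :=
  ((n : ℝ) - 2)/r + 2 * max (r - r₀) 0 / (ε + max (r - r₀) 0 ^ 2)

/-- `h` is a solution of `h'' + b h' − (k(k+n−3)/r²) h = 0` on `(0,1)` with `h(0) = 0`,
`h(1) = 1`, belonging to `C([0,1]) ∩ C^{2,1}((0,1])` (derivatives are taken within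
`(0,1]`, and the second derivative is locally Lipschitz on `(0,1]`). -/
def IsSolODE (n k : ℕ) (r₀ ε : ℝ) (h : ℝ → ℝ) : Prop :=
  ContinuousOn h (Icc 0 1) ∧ h 0 = 0 ∧ h 1 = 1 ∧
  (∀ r ∈ Ioc (0:ℝ) 1, DifferentiableWithinAt ℝ h (Ioc 0 1) r) ∧
  (∀ r ∈ Ioc (0:ℝ) 1,
    DifferentiableWithinAt ℝ (derivWithin h (Ioc 0 1)) (Ioc 0 1) r) ∧
  ContinuousOn (derivWithin (derivWithin h (Ioc 0 1)) (Ioc 0 1)) (Ioc 0 1) ∧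
  LocallyLipschitzOn (Ioc 0 1) (derivWithin (derivWithin h (Ioc 0 1)) (Ioc 0 1)) ∧
  (∀ r ∈ Ioo (0:ℝ) 1,
    derivWithin (derivWithin h (Ioc 0 1)) (Ioc 0 1) r +
      bCoeff n r₀ ε r * derivWithin h (Ioc 0 1) r -
      ((k : ℝ) * ((k : ℝ) + (n : ℝ) - 3) / r ^ 2) * h r = 0)

theorem exists_forall_pos_of_hasDerivAt {F : ℝ → ℝ} {ρ d b : ℝ} (hF : HasDerivAt F d ρ)
    (hF0 : F ρ = 0) (hd : 0 < d) (hb : ρ < b) :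
    ∃ σ ∈ Ioc ρ b, ∀ x ∈ Ioo ρ σ, 0 < F x := by
  obtain ⟨l, u, ⟨hl, hu⟩, hsub⟩ := mem_nhds_iff_exists_Ioo_subset.mp
    (eventually_nhdsWithin_sign_eq_of_deriv_pos (hF.deriv ▸ hd) hF0)
  refine ⟨min u b, ⟨lt_min hu hb, min_le_right u b⟩, fun x hx => ?_⟩
  have hsign : SignType.sign (F x) = SignType.sign (x - ρ) :=
    hsub ⟨hl.trans hx.1, hx.2.trans_le (min_le_left u b)⟩
  rwa [sign_pos (sub_pos.mpr hx.1), sign_eq_one_iff] at hsign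

section MaximumPrinciple

variable {a b : ℝ} {w u ν q : ℝ → ℝ}

theorem maximum_principle_of_flux {M : ℝ} (hab : a < b) (hw : ContinuousOn w (Icc a b))
    (hu : ∀ x ∈ Ioo a b, HasDerivAt w (u x) x) (hν : ∀ x ∈ Ioo a b, 0 < ν x)
    (hflux : ∀ x ∈ Ioo a b, HasDerivAt (fun y => ν y * u y) (q x * w x) x)
    (hq : ∀ x ∈ Ioo a b, 0 < q x) (hM : 0 ≤ M) (ha : w a ≤ M) (hb : w b ≤ M) :
    ∀ x ∈ Icc a b, w x ≤ M := by
  obtain ⟨ρ, hρ, hmax⟩ := isCompact_Icc.exists_isMaxOn (nonempty_Icc.mpr hab.le) hw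
  suffices w ρ ≤ M from fun x hx => (hmax hx).trans this
  by_contra! hMρ
  have hρ' : ρ ∈ Ioo a b :=
    ⟨hρ.1.lt_of_ne (by rintro rfl; linarith), hρ.2.lt_of_ne (by rintro rfl; linarith)⟩
  have hu0 : u ρ = 0 :=
    (hmax.isLocalMax (Icc_mem_nhds hρ'.1 hρ'.2)).hasDerivAt_eq_zero (hu ρ hρ')
  -- at a positive interior maximum the flux `ν u` vanishes and increases, so `w` increases
  obtain ⟨σ, hσ, hpos⟩ := exists_forall_pos_of_hasDerivAt (hflux ρ hρ')
    (by simp [hu0]) (mul_pos (hq ρ hρ') (hM.trans_lt hMρ)) hρ'.2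
  have hsub : Ioo ρ σ ⊆ Ioo a b := Ioo_subset_Ioo hρ.1 hσ.2
  obtain ⟨ξ, hξ, hslope⟩ := exists_hasDerivAt_eq_slope w u hσ.1
    (hw.mono (Icc_subset_Icc hρ.1 hσ.2)) (fun x hx => hu x (hsub hx))
  have huξ : 0 < u ξ := pos_of_mul_pos_right (hpos ξ hξ) (hν ξ (hsub hξ)).le
  rw [hslope, div_pos_iff_of_pos_right (sub_pos.mpr hσ.1), sub_pos] at huξ
  exact (hmax ⟨hρ.1.trans hσ.1.le, hσ.2⟩).not_gt huξ

theorem minimum_principle_of_flux {M : ℝ} (hab : a < b) (hw : ContinuousOn w (Icc a b))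
    (hu : ∀ x ∈ Ioo a b, HasDerivAt w (u x) x) (hν : ∀ x ∈ Ioo a b, 0 < ν x)
    (hflux : ∀ x ∈ Ioo a b, HasDerivAt (fun y => ν y * u y) (q x * w x) x)
    (hq : ∀ x ∈ Ioo a b, 0 < q x) (hM : M ≤ 0) (ha : M ≤ w a) (hb : M ≤ w b) :
    ∀ x ∈ Icc a b, M ≤ w x := by
  have := maximum_principle_of_flux (w := -w) (u := -u) (M := -M) hab hw.neg
    (fun x hx => (hu x hx).neg) hν (fun x hx => by simpa using (hflux x hx).fun_neg) hq
    (by linarith) (by simpa) (by simpa)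
  exact fun x hx => by simpa using this x hx

theorem eq_zero_of_flux (hab : a < b) (hw : ContinuousOn w (Icc a b))
    (hu : ∀ x ∈ Ioo a b, HasDerivAt w (u x) x) (hν : ∀ x ∈ Ioo a b, 0 < ν x)
    (hflux : ∀ x ∈ Ioo a b, HasDerivAt (fun y => ν y * u y) (q x * w x) x)
    (hq : ∀ x ∈ Ioo a b, 0 < q x) (ha : w a = 0) (hb : w b = 0) :
    ∀ x ∈ Icc a b, w x = 0 := fun x hx =>
  le_antisymm (maximum_principle_of_flux hab hw hu hν hflux hq le_rfl ha.le hb.le x hx)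
    (minimum_principle_of_flux hab hw hu hν hflux hq le_rfl ha.ge hb.ge x hx)

end MaximumPrinciple

theorem HasDerivAt.mul_of_hasDerivAt_sub_mul {ν u : ℝ → ℝ} {x β p : ℝ}
    (hν : HasDerivAt ν (β * ν x) x) (hu : HasDerivAt u (p - β * u x) x) :
    HasDerivAt (fun y => ν y * u y) (ν x * p) x :=
  (hν.mul hu).congr_deriv (by ring)

theorem hasDerivAt_pow_of_ne_zero (m : ℕ) {x : ℝ} (hx : x ≠ 0) :
    HasDerivAt (fun y => y ^ m) (m * x ^ m / x) x := by
  refine (hasDerivAt_pow m x).congr_deriv ?_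
  rcases m with _ | m
  · simp
  · field_simp
    simp [pow_succ]

theorem hasDerivAt_max_zero_sq (t : ℝ) :
    HasDerivAt (fun s : ℝ => max s 0 ^ 2) (2 * max t 0) t := by
  have hl : HasDerivWithinAt (fun s : ℝ => max s 0 ^ 2) (2 * max t 0) (Iic 0) t := by
    rcases le_or_gt t 0 with ht | ht
    · refine ((hasDerivWithinAt_const t _ 0).congr_of_mem (fun s hs => ?_) ht).congr_deriv ?_
      · simp [max_eq_right (mem_Iic.mp hs)]
      · simp [max_eq_right ht]
    · exact HasFDerivWithinAt.of_notMem_closure (by simpa using ht)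
  have hr : HasDerivWithinAt (fun s : ℝ => max s 0 ^ 2) (2 * max t 0) (Ici 0) t := by
    rcases le_or_gt 0 t with ht | ht
    · refine ((hasDerivAt_pow 2 t).hasDerivWithinAt.congr_of_mem (fun s hs => ?_) ht).congr_deriv
        ?_
      · simp [max_eq_left (mem_Ici.mp hs)]
      · simp [max_eq_left ht]
    · exact HasFDerivWithinAt.of_notMem_closure (by simpa using ht)
  simpa using hl.union hr

theorem nonneg_of_mul_le_of_hasDerivAt {f g μ : ℝ → ℝ} {a ρ : ℝ} (haρ : a < ρ)
    (hf : ContinuousOn f (Icc a ρ)) (hg : ∀ x ∈ Ioo a ρ, HasDerivAt f (g x) x)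
    (hμ : ∀ x ∈ Ioc a ρ, 0 < μ x) (hmono : ∀ x ∈ Ioo a ρ, μ x * g x ≤ μ ρ * g ρ)
    (hfa : f a ≤ f ρ) : 0 ≤ g ρ := by
  by_contra! hneg
  obtain ⟨ξ, hξ, hslope⟩ := exists_hasDerivAt_eq_slope f g haρ hf hg
  have hgξ : g ξ < 0 := neg_of_mul_neg_right
    ((hmono ξ hξ).trans_lt (mul_neg_of_pos_of_neg (hμ ρ ⟨haρ, le_rfl⟩) hneg))
    (hμ ξ (Ioo_subset_Ioc_self hξ)).le
  rw [hslope, div_neg_iff] at hgξ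
  rcases hgξ with ⟨-, hlt⟩ | ⟨hlt, -⟩ <;> linarith

noncomputable def integratingFactor (m : ℕ) (r₀ ε x : ℝ) : ℝ :=
  x ^ m * (ε + max (x - r₀) 0 ^ 2)

section IntegratingFactor

variable {m : ℕ} {r₀ ε x : ℝ}

theorem integratingFactor_pos (hε : 0 < ε) (hx : 0 < x) : 0 < integratingFactor m r₀ ε x := by
  unfold integratingFactor
  positivity

theorem integratingFactor_of_le (hx : x ≤ r₀) : integratingFactor m r₀ ε x = x ^ m * ε := by
  simp [integratingFactor, max_eq_right (sub_nonpos.mpr hx)]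

theorem integratingFactor_of_ge (hx : r₀ ≤ x) :
    integratingFactor m r₀ ε x = x ^ m * (ε + (x - r₀) ^ 2) := by
  simp [integratingFactor, max_eq_left (sub_nonneg.mpr hx)]

theorem bCoeff_of_le (hx : x ≤ r₀) : bCoeff (m + 2) r₀ ε x = m / x := by
  simp [bCoeff, max_eq_right (sub_nonpos.mpr hx)]

theorem hasDerivAt_integratingFactor (hε : 0 < ε) (hx : 0 < x) :
    HasDerivAt (integratingFactor m r₀ ε)
      (bCoeff (m + 2) r₀ ε x * integratingFactor m r₀ ε x) x := by
  have hshift : HasDerivAt (fun y => max (y - r₀) 0 ^ 2) (2 * max (x - r₀) 0) x :=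
    (hasDerivAt_max_zero_sq (x - r₀)).comp_sub_const x r₀
  refine ((hasDerivAt_pow_of_ne_zero m hx.ne').mul (hshift.const_add ε)).congr_deriv ?_
  have : 0 < ε + max (x - r₀) 0 ^ 2 := by positivity
  simp only [bCoeff, integratingFactor]
  push_cast
  field_simp
  ring

end IntegratingFactor

theorem eq_one_and_eq_zero_or_mul_pos {k m : ℕ} (hk : 1 ≤ k) :
    (k = 1 ∧ m = 0) ∨ 0 < (k : ℝ) * (k + m - 1) := by
  by_cases hdeg : k = 1 ∧ m = 0
  · exact Or.inl hdeg
  · have hkm : (2 : ℝ) ≤ k + m := by exact_mod_cast (by omega : 2 ≤ k + m)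
    have hk' : (1 : ℝ) ≤ k := by exact_mod_cast hk
    exact Or.inr (by nlinarith)

namespace IsSolODE

variable {n k m : ℕ} {r₀ ε x : ℝ} {h : ℝ → ℝ}

theorem hasDerivAt (hsol : IsSolODE n k r₀ ε h) (hx : x ∈ Ioo 0 1) :
    HasDerivAt h (derivWithin h (Ioc 0 1) x) x :=
  (hsol.2.2.2.1 x (Ioo_subset_Ioc_self hx)).hasDerivWithinAt.hasDerivAt
    (Ioc_mem_nhds hx.1 hx.2)

theorem hasDerivAt_derivWithin (hsol : IsSolODE n k r₀ ε h) (hx : x ∈ Ioo 0 1) :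
    HasDerivAt (derivWithin h (Ioc 0 1))
      (derivWithin (derivWithin h (Ioc 0 1)) (Ioc 0 1) x) x :=
  (hsol.2.2.2.2.1 x (Ioo_subset_Ioc_self hx)).hasDerivWithinAt.hasDerivAt
    (Ioc_mem_nhds hx.1 hx.2)

theorem derivWithin_derivWithin_eq (hsol : IsSolODE (m + 2) k r₀ ε h) (hx : x ∈ Ioo 0 1) :
    derivWithin (derivWithin h (Ioc 0 1)) (Ioc 0 1) x =
      k * (k + m - 1) / x ^ 2 * h x - bCoeff (m + 2) r₀ ε x * derivWithin h (Ioc 0 1) x := by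
  have hode := hsol.2.2.2.2.2.2.2 x hx
  push_cast at hode
  linear_combination hode

theorem hasDerivAt_flux (hsol : IsSolODE (m + 2) k r₀ ε h) (hε : 0 < ε) (hx : x ∈ Ioo 0 1) :
    HasDerivAt (fun y => integratingFactor m r₀ ε y * derivWithin h (Ioc 0 1) y)
      (k * (k + m - 1) * integratingFactor m r₀ ε x / x ^ 2 * h x) x :=
  ((hasDerivAt_integratingFactor hε hx.1).mul_of_hasDerivAt_sub_mul
    ((hsol.hasDerivAt_derivWithin hx).congr_deriv
      (hsol.derivWithin_derivWithin_eq hx))).congr_deriv (by ring)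

theorem nonneg_of_coeff_pos (hsol : IsSolODE (m + 2) k r₀ ε h) (hε : 0 < ε)
    (hc : 0 < (k : ℝ) * (k + m - 1)) : ∀ x ∈ Icc (0 : ℝ) 1, 0 ≤ h x :=
  minimum_principle_of_flux zero_lt_one hsol.1 (fun _ hx => hsol.hasDerivAt hx)
    (fun _ hx => integratingFactor_pos hε hx.1) (fun _ hx => hsol.hasDerivAt_flux hε hx)
    (fun _ hx => div_pos (mul_pos hc (integratingFactor_pos hε hx.1)) (pow_pos hx.1 2))
    le_rfl hsol.2.1.ge (by simp [hsol.2.2.1])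

theorem eq_pow_of_coeff_pos (hsol : IsSolODE (m + 2) k r₀ ε h) (hr₀ : r₀ ∈ Ioo (0 : ℝ) 1)
    (hc : 0 < (k : ℝ) * (k + m - 1)) : ∀ x ∈ Icc 0 r₀, h x = h r₀ / r₀ ^ k * x ^ k := by
  have hk : k ≠ 0 := by rintro rfl; simp at hc
  have hsub : Ioo 0 r₀ ⊆ Ioo (0 : ℝ) 1 := Ioo_subset_Ioo_right hr₀.2.le
  set A := h r₀ / r₀ ^ k
  -- `h` and `x ^ k` both solve the Euler equation `w'' + (m/x) w' = c w / x²` on `(0, r₀)`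
  have hu : ∀ x ∈ Ioo 0 r₀, HasDerivAt (fun y => h y - A * y ^ k)
      (derivWithin h (Ioc 0 1) x - A * (k * x ^ k / x)) x := fun x hx =>
    (hsol.hasDerivAt (hsub hx)).sub ((hasDerivAt_pow_of_ne_zero k hx.1.ne').const_mul A)
  have hflux : ∀ x ∈ Ioo 0 r₀, HasDerivAt
      (fun y => y ^ m * (derivWithin h (Ioc 0 1) y - A * (k * y ^ k / y)))
      (k * (k + m - 1) * x ^ m / x ^ 2 * (h x - A * x ^ k)) x := by
    intro x hx
    have hx0 := hx.1.ne'
    have hν : HasDerivAt (fun y => y ^ m) (m / x * x ^ m) x :=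
      (hasDerivAt_pow_of_ne_zero m hx0).congr_deriv (by ring)
    have hpow :
        HasDerivAt (fun y => A * (k * y ^ k / y)) (A * (k * (k - 1) * x ^ k / x ^ 2)) x :=
      ((((hasDerivAt_pow_of_ne_zero k hx0).const_mul (k : ℝ)).fun_div (hasDerivAt_id x)
        hx0).const_mul A).congr_deriv (by simp only [id]; field_simp)
    refine (hν.mul_of_hasDerivAt_sub_mul (p := k * (k + m - 1) / x ^ 2 * (h x - A * x ^ k))
      (((hsol.hasDerivAt_derivWithin (hsub hx)).fun_sub hpow).congr_deriv ?_)).congr_deriv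
      (by ring)
    rw [hsol.derivWithin_derivWithin_eq (hsub hx), bCoeff_of_le hx.2.le]
    field_simp
    ring
  have hw := eq_zero_of_flux hr₀.1
    ((hsol.1.mono (Icc_subset_Icc_right hr₀.2.le)).sub (by fun_prop)) hu
    (fun x hx => pow_pos hx.1 m) hflux
    (fun x hx => div_pos (mul_pos hc (pow_pos hx.1 m)) (pow_pos hx.1 2))
    (by simp [hsol.2.1, hk]) (by simp [A, (pow_pos hr₀.1 k).ne'])
  exact fun x hx => sub_eq_zero.mp (hw x hx)

theorem flux_eq_of_degenerate (hsol : IsSolODE 2 1 r₀ ε h) (hε : 0 < ε)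
    (hr₀ : r₀ ∈ Ioo (0 : ℝ) 1) (hx : x ∈ Ioo (0 : ℝ) 1) :
    integratingFactor 0 r₀ ε x * derivWithin h (Ioc 0 1) x =
      ε * derivWithin h (Ioc 0 1) r₀ := by
  have hflux : ∀ y ∈ Ioo (0 : ℝ) 1, HasDerivAt
      (fun y => integratingFactor 0 r₀ ε y * derivWithin h (Ioc 0 1) y) 0 y :=
    fun y hy => (hsol.hasDerivAt_flux hε hy).congr_deriv (by simp)
  have := isOpen_Ioo.is_const_of_deriv_eq_zero isPreconnected_Ioo
    (fun y hy => (hflux y hy).differentiableAt.differentiableWithinAt)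
    (fun y hy => (hflux y hy).deriv) hx hr₀
  simpa [integratingFactor_of_le le_rfl] using this

theorem eq_mul_of_degenerate (hsol : IsSolODE 2 1 r₀ ε h) (hε : 0 < ε)
    (hr₀ : r₀ ∈ Ioo (0 : ℝ) 1) : ∀ x ∈ Icc 0 r₀, h x = derivWithin h (Ioc 0 1) r₀ * x := by
  rintro x ⟨hx0, hxr⟩
  rcases hx0.eq_or_lt with rfl | hx0
  · simp [hsol.2.1]
  have hsub : Ioo 0 x ⊆ Ioo (0 : ℝ) 1 := Ioo_subset_Ioo_right (hxr.trans hr₀.2.le)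
  obtain ⟨ξ, hξ, hslope⟩ := exists_hasDerivAt_eq_slope h (derivWithin h (Ioc 0 1)) hx0
    (hsol.1.mono (Icc_subset_Icc_right (hxr.trans hr₀.2.le)))
    (fun y hy => hsol.hasDerivAt (hsub hy))
  have hξ' := hsol.flux_eq_of_degenerate hε hr₀ (hsub hξ)
  rw [integratingFactor_of_le (hξ.2.le.trans hxr), pow_zero, one_mul, mul_right_inj' hε.ne',
    hslope, hsol.2.1, sub_zero, sub_zero, div_eq_iff hx0.ne'] at hξ'
  exact hξ'

theorem derivWithin_nonneg (hsol : IsSolODE (m + 2) k r₀ ε h) (hk : 1 ≤ k) (hε : 0 < ε)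
    (hr₀ : r₀ ∈ Ioo (0 : ℝ) 1) : ∀ x ∈ Ioo (0 : ℝ) 1, 0 ≤ derivWithin h (Ioc 0 1) x := by
  rcases eq_one_and_eq_zero_or_mul_pos (m := m) hk with ⟨rfl, rfl⟩ | hc
  · have hr₀' : 0 ≤ derivWithin h (Ioc 0 1) r₀ := by
      by_contra! hneg
      obtain ⟨ξ, hξ, hslope⟩ := exists_hasDerivAt_eq_slope h _ zero_lt_one hsol.1
        (fun x hx => hsol.hasDerivAt hx)
      have hflux := hsol.flux_eq_of_degenerate hε hr₀ hξ
      have hξneg : derivWithin h (Ioc 0 1) ξ < 0 := neg_of_mul_neg_right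
        (hflux ▸ mul_neg_of_pos_of_neg hε hneg) (integratingFactor_pos hε hξ.1).le
      rw [hslope, hsol.2.1, hsol.2.2.1] at hξneg
      norm_num at hξneg
    exact fun x hx => nonneg_of_mul_nonneg_right
      ((hsol.flux_eq_of_degenerate hε hr₀ hx).symm ▸ mul_nonneg hε.le hr₀')
      (integratingFactor_pos hε hx.1)
  · have hh := hsol.nonneg_of_coeff_pos hε hc
    have hmono : MonotoneOn (fun y => integratingFactor m r₀ ε y * derivWithin h (Ioc 0 1) y)
        (Ioo 0 1) :=
      monotoneOn_of_hasDerivWithinAt_nonneg (convex_Ioo 0 1)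
        (fun y hy => (hsol.hasDerivAt_flux hε hy).continuousAt.continuousWithinAt)
        (by simpa using fun y hy => (hsol.hasDerivAt_flux hε hy).hasDerivWithinAt)
        (by simpa using fun y hy => mul_nonneg (div_nonneg (mul_nonneg hc.le
          (integratingFactor_pos hε hy.1).le) (sq_nonneg y)) (hh y (Ioo_subset_Icc_self hy)))
    intro ρ hρ
    exact nonneg_of_mul_le_of_hasDerivAt hρ.1 (hsol.1.mono (Icc_subset_Icc_right hρ.2.le))
      (fun x hx => hsol.hasDerivAt ⟨hx.1, hx.2.trans hρ.2⟩)
      (fun x hx => integratingFactor_pos hε hx.1)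
      (fun x hx => hmono ⟨hx.1, hx.2.trans hρ.2⟩ hρ hx.2.le)
      (hsol.2.1.symm ▸ hh ρ (Ioo_subset_Icc_self hρ))

theorem mem_Icc (hsol : IsSolODE (m + 2) k r₀ ε h) (hk : 1 ≤ k) (hε : 0 < ε)
    (hr₀ : r₀ ∈ Ioo (0 : ℝ) 1) : ∀ x ∈ Icc (0 : ℝ) 1, h x ∈ Icc 0 1 := by
  have hmono : MonotoneOn h (Icc 0 1) :=
    monotoneOn_of_hasDerivWithinAt_nonneg (convex_Icc 0 1) hsol.1
      (by simpa using fun x hx => (hsol.hasDerivAt hx).hasDerivWithinAt)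
      (by simpa using hsol.derivWithin_nonneg hk hε hr₀)
  intro x hx
  exact ⟨hsol.2.1 ▸ hmono (left_mem_Icc.2 zero_le_one) hx hx.1,
    hsol.2.2.1 ▸ hmono hx (right_mem_Icc.2 zero_le_one) hx.2⟩

theorem eq_pow (hsol : IsSolODE (m + 2) k r₀ ε h) (hk : 1 ≤ k) (hε : 0 < ε)
    (hr₀ : r₀ ∈ Ioo (0 : ℝ) 1) : ∀ x ∈ Icc 0 r₀, h x = h r₀ / r₀ ^ k * x ^ k := by
  rcases eq_one_and_eq_zero_or_mul_pos (m := m) hk with ⟨rfl, rfl⟩ | hc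
  · have hlin := hsol.eq_mul_of_degenerate hε hr₀
    intro x hx
    rw [hlin x hx, hlin r₀ ⟨hr₀.1.le, le_rfl⟩]
    field_simp [hr₀.1.ne']
  · exact hsol.eq_pow_of_coeff_pos hr₀ hc

theorem derivWithin_eq_of_mem_Ioc (hsol : IsSolODE (m + 2) k r₀ ε h) (hk : 1 ≤ k)
    (hε : 0 < ε) (hr₀ : r₀ ∈ Ioo (0 : ℝ) 1) (hx : x ∈ Ioc 0 r₀) :
    derivWithin h (Ioc 0 1) x = h r₀ / r₀ ^ k * (k * x ^ k / x) :=
  (uniqueDiffOn_Icc hr₀.1 x (Ioc_subset_Icc_self hx)).eq_deriv _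
    ((hsol.hasDerivAt ⟨hx.1, hx.2.trans_lt hr₀.2⟩).hasDerivWithinAt.congr_of_mem
      (fun y hy => (hsol.eq_pow hk hε hr₀ y hy).symm) (Ioc_subset_Icc_self hx))
    ((hasDerivAt_pow_of_ne_zero k hx.1.ne').const_mul _).hasDerivWithinAt

theorem derivWithin_le_of_mem_Ioc (hsol : IsSolODE (m + 2) k r₀ ε h) (hk : 1 ≤ k)
    (hε : 0 < ε) (hr₀ : r₀ ∈ Ioo (0 : ℝ) 1) (hx : x ∈ Ioc 0 r₀) :
    derivWithin h (Ioc 0 1) x ≤ k / r₀ := by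
  have hhr₀ := (hsol.mem_Icc hk hε hr₀ r₀ ⟨hr₀.1.le, hr₀.2.le⟩).2
  rw [hsol.derivWithin_eq_of_mem_Ioc hk hε hr₀ hx]
  obtain ⟨j, rfl⟩ : ∃ j, k = j + 1 := ⟨k - 1, by omega⟩
  have hx0 := hx.1
  have hr₀0 := hr₀.1
  calc h r₀ / r₀ ^ (j + 1) * ((j + 1 : ℕ) * x ^ (j + 1) / x)
      = h r₀ * (j + 1) * x ^ j / (r₀ ^ j * r₀) := by
        field_simp
        push_cast
        ring
    _ ≤ 1 * (j + 1) * r₀ ^ j / (r₀ ^ j * r₀) := by gcongr; exact hx.2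
    _ = (j + 1 : ℕ) / r₀ := by
        field_simp
        push_cast
        ring

theorem derivWithin_le_of_mem_Ioo (hsol : IsSolODE (m + 2) k r₀ ε h) (hk : 1 ≤ k)
    (hε : 0 < ε) (hr₀ : r₀ ∈ Ioo (0 : ℝ) 1) {r : ℝ} (hr : r ∈ Ioo r₀ 1) :
    derivWithin h (Ioc 0 1) r ≤ k / r₀ + k * (k + m - 1) / r₀ ^ 2 := by
  set g := derivWithin h (Ioc 0 1)
  set μ := integratingFactor m r₀ ε
  set c : ℝ := k * (k + m - 1)
  have hc : 0 ≤ c := (eq_one_and_eq_zero_or_mul_pos (m := m) hk).elim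
    (fun ⟨h1, h2⟩ => by simp [c, h1, h2]) le_of_lt
  have hsub : Icc r₀ r ⊆ Ioo 0 1 := Icc_subset_Ioo hr₀.1 hr.2
  have ht : 0 < r - r₀ := sub_pos.mpr hr.1
  have hr0 : 0 < r := hr₀.1.trans hr.1
  obtain ⟨ξ, hξ, hslope⟩ := exists_hasDerivAt_eq_slope (fun y => μ y * g y) _ hr.1
    (fun y hy => (hsol.hasDerivAt_flux hε (hsub hy)).continuousAt.continuousWithinAt)
    (fun y hy => hsol.hasDerivAt_flux hε (hsub (Ioo_subset_Icc_self hy)))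
  have hξ0 : 0 < ξ := hr₀.1.trans hξ.1
  have hhξ := (hsol.mem_Icc hk hε hr₀ ξ
    (Ioo_subset_Icc_self (hsub (Ioo_subset_Icc_self hξ)))).2
  have hflux : c * μ ξ / ξ ^ 2 * h ξ ≤ c * μ r / r₀ ^ 2 := by
    have hμ : μ ξ ≤ μ r := by
      simp only [μ, integratingFactor_of_ge hξ.1.le, integratingFactor_of_ge hr.1.le]
      have : 0 ≤ ξ - r₀ := by linarith [hξ.1]
      gcongr ?_ ^ m * (ε + ?_ ^ 2) <;> linarith [hξ.2]
    have hμξ := integratingFactor_pos (m := m) (r₀ := r₀) hε hξ0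
    calc c * μ ξ / ξ ^ 2 * h ξ ≤ c * μ ξ / ξ ^ 2 :=
          mul_le_of_le_one_right (by positivity) hhξ
      _ ≤ c * μ r / r₀ ^ 2 :=
          div_le_div₀ (mul_nonneg hc (integratingFactor_pos hε hr0).le)
            (mul_le_mul_of_nonneg_left hμ hc) (pow_pos hr₀.1 2)
            (pow_le_pow_left₀ hr₀.1.le hξ.1.le 2)
  have hG : μ r * g r - μ r₀ * g r₀ ≤ c * μ r / r₀ ^ 2 := by
    have hq := hslope.symm.trans_le hflux
    rw [div_le_iff₀ ht] at hq
    have := integratingFactor_pos (m := m) (r₀ := r₀) hε hr0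
    exact hq.trans (mul_le_of_le_one_right (by positivity) (by linarith [hr.2, hr₀.1]))
  have hGr₀ : μ r₀ * g r₀ ≤ μ r * (k / r₀) := by
    have hμ : μ r₀ ≤ μ r := by
      simp only [μ, integratingFactor_of_le le_rfl, integratingFactor_of_ge hr.1.le]
      exact mul_le_mul (pow_le_pow_left₀ hr₀.1.le hr.1.le m)
        (le_add_of_nonneg_right (sq_nonneg _)) hε.le (by positivity)
    calc μ r₀ * g r₀ ≤ μ r₀ * (k / r₀) :=
          mul_le_mul_of_nonneg_left (hsol.derivWithin_le_of_mem_Ioc hk hε hr₀ ⟨hr₀.1, le_rfl⟩)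
            (integratingFactor_pos hε hr₀.1).le
      _ ≤ μ r * (k / r₀) :=
          mul_le_mul_of_nonneg_right hμ (div_nonneg (Nat.cast_nonneg k) hr₀.1.le)
  have hμr := integratingFactor_pos (m := m) (r₀ := r₀) hε hr0
  refine le_of_mul_le_mul_left ?_ hμr
  calc μ r * g r ≤ μ r * (k / r₀) + c * μ r / r₀ ^ 2 := by linarith
    _ = μ r * (k / r₀ + c / r₀ ^ 2) := by ring

end IsSolODE

/-- Let `h` be the solution of the ODE from Lemma 3.1 (degree `k ≥ 1`).
Then `|h'(r)| ≤ C` on `(0,1)`, where `C > 0` depends only on `n`, `k`, `r₀`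
(in particular, `C` is independent of `ε`). -/
theorem stmt10 (n k : ℕ) (hn : 2 ≤ n) (hk : 1 ≤ k) (r₀ : ℝ)
    (hr₀ : r₀ ∈ Ioo (0:ℝ) (1/2)) :
    ∃ C : ℝ, 0 < C ∧
      ∀ ε : ℝ, 0 < ε → ∀ h : ℝ → ℝ, IsSolODE n k r₀ ε h →
        ∀ r ∈ Ioo (0:ℝ) 1, |derivWithin h (Ioc 0 1) r| ≤ C := by
  have hr₀' : r₀ ∈ Ioo (0 : ℝ) 1 := ⟨hr₀.1, by linarith [hr₀.2]⟩
  have hk' : (1 : ℝ) ≤ k := by exact_mod_cast hk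
  have hn' : (2 : ℝ) ≤ n := by exact_mod_cast hn
  have hc : 0 ≤ k * (k + n - 3 : ℝ) / r₀ ^ 2 := div_nonneg (by nlinarith) (sq_nonneg r₀)
  refine ⟨k / r₀ + k * (k + n - 3) / r₀ ^ 2,
    add_pos_of_pos_of_nonneg (div_pos (by linarith) hr₀.1) hc, ?_⟩
  intro ε hε h hsol r hr
  obtain ⟨m, rfl⟩ : ∃ m, n = m + 2 := ⟨n - 2, by omega⟩
  rw [abs_of_nonneg (hsol.derivWithin_nonneg hk hε hr₀' r hr)]
  rcases le_or_gt r r₀ with hle | hlt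
  · exact (hsol.derivWithin_le_of_mem_Ioc hk hε hr₀' ⟨hr.1, hle⟩).trans
      (le_add_of_nonneg_right hc)
  · convert hsol.derivWithin_le_of_mem_Ioo hk hε hr₀' ⟨hlt, hr.2⟩ using 4
    push_cast
    ring
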